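/- arXiv:2209.02307 — 5 statements merged into one kernel-verified Lean document; each statement's English description precedes it below -/
import Mathlib

section
/- For every formula φ of coSafetyLTL\{wX} (the fragment of LTL in negation normal form whose only temporal operators are X and U), the finite-word language of φ is closed under appending arbitrary finite suffixes, i.e., L_fin(φ) = L_fin(φ)·(2^Σ)^*. -/
namespace CoSafetyPaper

/-- LTL formulas in negation normal form over proposition letters `PL`. -/
inductive LTLF (PL : Type) : Type
  | pos : PL → LTLF PL                      -- p
  | nneg : PL → LTLF PL                     -- ¬p
  | disj : LTLF PL → LTLF PL → LTLF PL      -- φ ∨ ψ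
  | conj : LTLF PL → LTLF PL → LTLF PL      -- φ ∧ ψ
  | next : LTLF PL → LTLF PL                -- X φ
  | wnext : LTLF PL → LTLF PL               -- wX φ
  | untl : LTLF PL → LTLF PL → LTLF PL      -- φ U ψ
  | rel : LTLF PL → LTLF PL → LTLF PL       -- φ R ψ

/-- Satisfaction of an LTL formula by a word given as `σ : ℕ → Set PL`
together with a length `L : ℕ∞` (`⊤` for infinite words), at position `i`. -/
def Sat {PL : Type} (σ : ℕ → Set PL) (L : ℕ∞) : LTLF PL → ℕ → Prop
  | .pos p, i => p ∈ σ i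
  | .nneg p, i => p ∉ σ i
  | .disj φ ψ, i => Sat σ L φ i ∨ Sat σ L ψ i
  | .conj φ ψ, i => Sat σ L φ i ∧ Sat σ L ψ i
  | .next φ, i => ((i + 1 : ℕ) : ℕ∞) < L ∧ Sat σ L φ (i + 1)
  | .wnext φ, i => ((i + 1 : ℕ) : ℕ∞) = L ∨ Sat σ L φ (i + 1)
  | .untl φ ψ, i => ∃ j : ℕ, i ≤ j ∧ (j : ℕ∞) < L ∧ Sat σ L ψ j ∧
      ∀ k : ℕ, i ≤ k → k < j → Sat σ L φ k
  | .rel φ ψ, i =>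
      (∀ j : ℕ, i ≤ j → (j : ℕ∞) < L → Sat σ L ψ j) ∨
      (∃ k : ℕ, i ≤ k ∧ (k : ℕ∞) < L ∧ Sat σ L φ k ∧
        ∀ j : ℕ, i ≤ j → j ≤ k → Sat σ L ψ j)

/-- The function `ℕ → Set PL` associated with a finite word (a list of letters). -/
def wordOf {PL : Type} (xs : List (Set PL)) : ℕ → Set PL := fun n => xs.getD n ∅

/-- Satisfaction over a finite word. -/
def FinSat {PL : Type} (xs : List (Set PL)) (φ : LTLF PL) (i : ℕ) : Prop :=
  Sat (wordOf xs) (xs.length : ℕ∞) φ i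

/-- `L_fin(φ)`: the nonempty finite words satisfying `φ` (at position 0). -/
def LfinL {PL : Type} (φ : LTLF PL) : Set (List (Set PL)) :=
  {xs | xs ≠ [] ∧ FinSat xs φ 0}

/-- `L(φ)`: the infinite words satisfying `φ` (at position 0). -/
def LinfL {PL : Type} (φ : LTLF PL) : Set (ℕ → Set PL) :=
  {σ | Sat σ ⊤ φ 0}

/-- `L·(2^Σ)^*` : concatenation of a language of finite words with all finite words. -/
def catFin {PL : Type} (Lg : Set (List (Set PL))) : Set (List (Set PL)) :=
  {w | ∃ u ∈ Lg, ∃ v : List (Set PL), w = u ++ v}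

/-- Concatenation of a finite word with an infinite word. -/
def listConc {PL : Type} (u : List (Set PL)) (v : ℕ → Set PL) : ℕ → Set PL :=
  fun n => if n < u.length then wordOf u n else v (n - u.length)

/-- `L·(2^Σ)^ω` : concatenation of a language of finite words with all infinite words. -/
def catInf {PL : Type} (Lg : Set (List (Set PL))) : Set (ℕ → Set PL) :=
  {w | ∃ u ∈ Lg, ∃ v : ℕ → Set PL, w = listConc u v}

/-- The prefix `σ_[0,i]` of an infinite word, as a list. -/
def prefixList {PL : Type} (σ : ℕ → Set PL) (i : ℕ) : List (Set PL) :=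
  (List.range (i + 1)).map σ

/-- co-safety ω-languages. -/
def IsCoSafetyLang {PL : Type} (Lg : Set (ℕ → Set PL)) : Prop :=
  ∀ σ ∈ Lg, ∃ i : ℕ, ∀ σ' : ℕ → Set PL, listConc (prefixList σ i) σ' ∈ Lg

/-- safety ω-languages. -/
def IsSafetyLang {PL : Type} (Lg : Set (ℕ → Set PL)) : Prop :=
  ∀ σ : ℕ → Set PL, σ ∉ Lg → ∃ i : ℕ, ∀ σ' : ℕ → Set PL, listConc (prefixList σ i) σ' ∉ Lg

/-- co-safety languages of finite words. -/
def IsCoSafetyLangFin {PL : Type} (Lg : Set (List (Set PL))) : Prop :=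
  (∀ σ ∈ Lg, σ ≠ []) ∧
  ∀ σ ∈ Lg, ∃ i < σ.length, ∀ σ' : List (Set PL), σ.take (i + 1) ++ σ' ∈ Lg

/-- safety languages of finite words. -/
def IsSafetyLangFin {PL : Type} (Lg : Set (List (Set PL))) : Prop :=
  (∀ σ ∈ Lg, σ ≠ []) ∧
  ∀ σ : List (Set PL), σ ≠ [] → σ ∉ Lg →
    ∃ i < σ.length, ∀ σ' : List (Set PL), σ.take (i + 1) ++ σ' ∉ Lg

/-- coSafetyLTL: only X, wX and U as temporal operators. -/
inductive CoSafetyLTL {PL : Type} : LTLF PL → Prop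
  | pos (p : PL) : CoSafetyLTL (.pos p)
  | nneg (p : PL) : CoSafetyLTL (.nneg p)
  | disj {φ ψ : LTLF PL} : CoSafetyLTL φ → CoSafetyLTL ψ → CoSafetyLTL (.disj φ ψ)
  | conj {φ ψ : LTLF PL} : CoSafetyLTL φ → CoSafetyLTL ψ → CoSafetyLTL (.conj φ ψ)
  | next {φ : LTLF PL} : CoSafetyLTL φ → CoSafetyLTL (.next φ)
  | wnext {φ : LTLF PL} : CoSafetyLTL φ → CoSafetyLTL (.wnext φ)
  | untl {φ ψ : LTLF PL} : CoSafetyLTL φ → CoSafetyLTL ψ → CoSafetyLTL (.untl φ ψ)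

/-- coSafetyLTL without the weak tomorrow operator: only X and U. -/
inductive CoSafetyLTLnoW {PL : Type} : LTLF PL → Prop
  | pos (p : PL) : CoSafetyLTLnoW (.pos p)
  | nneg (p : PL) : CoSafetyLTLnoW (.nneg p)
  | disj {φ ψ : LTLF PL} : CoSafetyLTLnoW φ → CoSafetyLTLnoW ψ → CoSafetyLTLnoW (.disj φ ψ)
  | conj {φ ψ : LTLF PL} : CoSafetyLTLnoW φ → CoSafetyLTLnoW ψ → CoSafetyLTLnoW (.conj φ ψ)
  | next {φ : LTLF PL} : CoSafetyLTLnoW φ → CoSafetyLTLnoW (.next φ)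
  | untl {φ ψ : LTLF PL} : CoSafetyLTLnoW φ → CoSafetyLTLnoW ψ → CoSafetyLTLnoW (.untl φ ψ)

/-- SafetyLTL: only X, wX and R as temporal operators. -/
inductive SafetyLTL {PL : Type} : LTLF PL → Prop
  | pos (p : PL) : SafetyLTL (.pos p)
  | nneg (p : PL) : SafetyLTL (.nneg p)
  | disj {φ ψ : LTLF PL} : SafetyLTL φ → SafetyLTL ψ → SafetyLTL (.disj φ ψ)
  | conj {φ ψ : LTLF PL} : SafetyLTL φ → SafetyLTL ψ → SafetyLTL (.conj φ ψ)
  | next {φ : LTLF PL} : SafetyLTL φ → SafetyLTL (.next φ)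
  | wnext {φ : LTLF PL} : SafetyLTL φ → SafetyLTL (.wnext φ)
  | rel {φ ψ : LTLF PL} : SafetyLTL φ → SafetyLTL ψ → SafetyLTL (.rel φ ψ)

/-- SafetyLTL without the tomorrow operator: only wX and R. -/
inductive SafetyLTLnoX {PL : Type} : LTLF PL → Prop
  | pos (p : PL) : SafetyLTLnoX (.pos p)
  | nneg (p : PL) : SafetyLTLnoX (.nneg p)
  | disj {φ ψ : LTLF PL} : SafetyLTLnoX φ → SafetyLTLnoX ψ → SafetyLTLnoX (.disj φ ψ)
  | conj {φ ψ : LTLF PL} : SafetyLTLnoX φ → SafetyLTLnoX ψ → SafetyLTLnoX (.conj φ ψ)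
  | wnext {φ : LTLF PL} : SafetyLTLnoX φ → SafetyLTLnoX (.wnext φ)
  | rel {φ ψ : LTLF PL} : SafetyLTLnoX φ → SafetyLTLnoX ψ → SafetyLTLnoX (.rel φ ψ)

/-- First-order formulas over words: signature `<`, `=`, and a unary predicate
for each proposition letter; variables are natural numbers. -/
inductive FOW (PL : Type) : Type
  | lt : ℕ → ℕ → FOW PL
  | eq : ℕ → ℕ → FOW PL
  | pred : PL → ℕ → FOW PL
  | not : FOW PL → FOW PL
  | disj : FOW PL → FOW PL → FOW PL
  | conj : FOW PL → FOW PL → FOW PL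
  | ex : ℕ → FOW PL → FOW PL
  | all : ℕ → FOW PL → FOW PL

/-- First-order satisfaction over a word `σ` with length `L : ℕ∞` (`⊤` for
infinite words) under a valuation `v` of the variables into positions. -/
def FOSat {PL : Type} (σ : ℕ → Set PL) (L : ℕ∞) : FOW PL → (ℕ → ℕ) → Prop
  | .lt x y, v => v x < v y
  | .eq x y, v => v x = v y
  | .pred p x, v => p ∈ σ (v x)
  | .not φ, v => ¬ FOSat σ L φ v
  | .disj φ ψ, v => FOSat σ L φ v ∨ FOSat σ L ψ v
  | .conj φ ψ, v => FOSat σ L φ v ∧ FOSat σ L ψ v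
  | .ex x φ, v => ∃ n : ℕ, (n : ℕ∞) < L ∧ FOSat σ L φ (Function.update v x n)
  | .all x φ, v => ∀ n : ℕ, (n : ℕ∞) < L → FOSat σ L φ (Function.update v x n)

/-- Free variables of a first-order formula. -/
def FOW.free {PL : Type} : FOW PL → Finset ℕ
  | .lt x y => {x, y}
  | .eq x y => {x, y}
  | .pred _ x => {x}
  | .not φ => φ.free
  | .disj φ ψ => φ.free ∪ ψ.free
  | .conj φ ψ => φ.free ∪ ψ.free
  | .ex x φ => φ.free.erase x
  | .all x φ => φ.free.erase x

/-- `φ → ψ` as an abbreviation. -/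
def FOW.impl {PL : Type} (φ ψ : FOW PL) : FOW PL := .disj (.not φ) ψ

/-- `y ≤ x` as an abbreviation. -/
def FOW.le {PL : Type} (y x : ℕ) : FOW PL := .disj (.lt y x) (.eq y x)

/-- The coSafetyFO fragment:
`φ ::= x<y | x=y | x≠y | P(x) | ¬P(x) | φ∨φ | φ∧φ | ∃y(x<y ∧ φ) | ∀y(x<y<z → φ)`. -/
inductive CoSafetyFO {PL : Type} : FOW PL → Prop
  | lt (x y : ℕ) : CoSafetyFO (.lt x y)
  | eq (x y : ℕ) : CoSafetyFO (.eq x y)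
  | ne (x y : ℕ) : CoSafetyFO (.not (.eq x y))
  | pred (p : PL) (x : ℕ) : CoSafetyFO (.pred p x)
  | npred (p : PL) (x : ℕ) : CoSafetyFO (.not (.pred p x))
  | disj {φ ψ : FOW PL} : CoSafetyFO φ → CoSafetyFO ψ → CoSafetyFO (.disj φ ψ)
  | conj {φ ψ : FOW PL} : CoSafetyFO φ → CoSafetyFO ψ → CoSafetyFO (.conj φ ψ)
  | ex (x y : ℕ) {φ : FOW PL} : CoSafetyFO φ →
      CoSafetyFO (.ex y (.conj (.lt x y) φ))
  | all (x y z : ℕ) {φ : FOW PL} : CoSafetyFO φ →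
      CoSafetyFO (.all y (FOW.impl (.conj (.lt x y) (.lt y z)) φ))

/-- The SafetyFO fragment:
`φ ::= x<y | x=y | x≠y | P(x) | ¬P(x) | φ∨φ | φ∧φ | ∃y(x<y<z ∧ φ) | ∀y(x<y → φ)`. -/
inductive SafetyFO {PL : Type} : FOW PL → Prop
  | lt (x y : ℕ) : SafetyFO (.lt x y)
  | eq (x y : ℕ) : SafetyFO (.eq x y)
  | ne (x y : ℕ) : SafetyFO (.not (.eq x y))
  | pred (p : PL) (x : ℕ) : SafetyFO (.pred p x)
  | npred (p : PL) (x : ℕ) : SafetyFO (.not (.pred p x))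
  | disj {φ ψ : FOW PL} : SafetyFO φ → SafetyFO ψ → SafetyFO (.disj φ ψ)
  | conj {φ ψ : FOW PL} : SafetyFO φ → SafetyFO ψ → SafetyFO (.conj φ ψ)
  | ex (x y z : ℕ) {φ : FOW PL} : SafetyFO φ →
      SafetyFO (.ex y (.conj (.conj (.lt x y) (.lt y z)) φ))
  | all (x y : ℕ) {φ : FOW PL} : SafetyFO φ →
      SafetyFO (.all y (FOW.impl (.lt x y) φ))

/-- A formula has exactly one free variable. -/
def HasOneFree {PL : Type} (φ : FOW PL) : Prop := ∃ x : ℕ, φ.free = {x}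

/-- `L_fin(φ(x))` for a first-order formula with (exactly one) free variable:
nonempty finite words that satisfy it with the free variable interpreted as `0`. -/
def LfinFO {PL : Type} (φ : FOW PL) : Set (List (Set PL)) :=
  {xs | xs ≠ [] ∧ FOSat (wordOf xs) (xs.length : ℕ∞) φ (fun _ => 0)}

/-- `L(φ(x))` for a first-order formula with (exactly one) free variable:
infinite words that satisfy it with the free variable interpreted as `0`. -/
def LinfFO {PL : Type} (φ : FOW PL) : Set (ℕ → Set PL) :=
  {σ | FOSat σ ⊤ φ (fun _ => 0)}

/-- `⟦coSafetyFO⟧_fin`. -/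
def CoSafetyFOFin (PL : Type) : Set (Set (List (Set PL))) :=
  {Lg | ∃ φ : FOW PL, CoSafetyFO φ ∧ HasOneFree φ ∧ Lg = LfinFO φ}

/-- `⟦coSafetyFO⟧`. -/
def CoSafetyFOInf (PL : Type) : Set (Set (ℕ → Set PL)) :=
  {Lg | ∃ φ : FOW PL, CoSafetyFO φ ∧ HasOneFree φ ∧ Lg = LinfFO φ}

/-- `⟦SafetyFO⟧_fin`. -/
def SafetyFOFin (PL : Type) : Set (Set (List (Set PL))) :=
  {Lg | ∃ φ : FOW PL, SafetyFO φ ∧ HasOneFree φ ∧ Lg = LfinFO φ}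

/-- `⟦FO⟧_fin` (formulas with exactly one free variable). -/
def FOFin (PL : Type) : Set (Set (List (Set PL))) :=
  {Lg | ∃ φ : FOW PL, HasOneFree φ ∧ Lg = LfinFO φ}

/-- `⟦coSafetyLTL⟧_fin`. -/
def CoSafetyLTLFin (PL : Type) : Set (Set (List (Set PL))) :=
  {Lg | ∃ φ : LTLF PL, CoSafetyLTL φ ∧ Lg = LfinL φ}

/-- `⟦coSafetyLTL\{wX}⟧_fin`. -/
def CoSafetyLTLnoWFin (PL : Type) : Set (Set (List (Set PL))) :=
  {Lg | ∃ φ : LTLF PL, CoSafetyLTLnoW φ ∧ Lg = LfinL φ}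

/-- `⟦SafetyLTL⟧_fin`. -/
def SafetyLTLFin (PL : Type) : Set (Set (List (Set PL))) :=
  {Lg | ∃ φ : LTLF PL, SafetyLTL φ ∧ Lg = LfinL φ}

/-- `⟦SafetyLTL\{X}⟧_fin`. -/
def SafetyLTLnoXFin (PL : Type) : Set (Set (List (Set PL))) :=
  {Lg | ∃ φ : LTLF PL, SafetyLTLnoX φ ∧ Lg = LfinL φ}

/-- `⟦LTL⟧_fin`. -/
def LTLFin (PL : Type) : Set (Set (List (Set PL))) :=
  {Lg | ∃ φ : LTLF PL, Lg = LfinL φ}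

/-- `⟦LTL⟧`. -/
def LTLInf (PL : Type) : Set (Set (ℕ → Set PL)) :=
  {Lg | ∃ φ : LTLF PL, Lg = LinfL φ}

/-- `⟦coSafetyLTL⟧`. -/
def CoSafetyLTLInf (PL : Type) : Set (Set (ℕ → Set PL)) :=
  {Lg | ∃ φ : LTLF PL, CoSafetyLTL φ ∧ Lg = LinfL φ}

/-- `⟦SafetyLTL⟧`. -/
def SafetyLTLInf (PL : Type) : Set (Set (ℕ → Set PL)) :=
  {Lg | ∃ φ : LTLF PL, SafetyLTL φ ∧ Lg = LinfL φ}

/-- Quantifier-free first-order formulas in one (implicit) variable, i.e.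
boolean combinations of the atoms `P(x)`, `x=x`, `x<x`. -/
inductive QF (PL : Type) : Type
  | tru : QF PL
  | fls : QF PL
  | pos : PL → QF PL
  | qnot : QF PL → QF PL
  | qor : QF PL → QF PL → QF PL
  | qand : QF PL → QF PL → QF PL

/-- Evaluation of a quantifier-free one-variable formula at a letter. -/
def QF.sat {PL : Type} (s : Set PL) : QF PL → Prop
  | .tru => True
  | .fls => False
  | .pos p => p ∈ s
  | .qnot φ => ¬ QF.sat s φ
  | .qor φ ψ => QF.sat s φ ∨ QF.sat s ψ
  | .qand φ ψ => QF.sat s φ ∧ QF.sat s ψ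

/-- An ∃-formula with free variables `z₀,…,z_m`:
`∃x₀…∃x_n (x₀<⋯<x_n ∧ z₀=x₀ ∧ ⋀ z_k=x_{i_k} ∧ ⋀ α_j(x_j) ∧ ⋀ ∀y(x_{j−1}<y<x_j → β_j(y)))`. -/
structure ExForm (PL : Type) (m : ℕ) where
  n : ℕ
  bind : Fin m → Fin (n + 1)
  alpha : Fin (n + 1) → QF PL
  beta : Fin n → QF PL

/-- Satisfaction of an ∃-formula on the word `σ` of length `L` (`⊤` if infinite),
where `z : Fin (m+1) → ℕ` interprets the free variables `z₀,…,z_m`. -/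
def ExForm.ESat {PL : Type} {m : ℕ} (e : ExForm PL m) (σ : ℕ → Set PL) (L : ℕ∞)
    (z : Fin (m + 1) → ℕ) : Prop :=
  ∃ x : Fin (e.n + 1) → ℕ,
    StrictMono x ∧
    (∀ j : Fin (e.n + 1), ((x j : ℕ) : ℕ∞) < L) ∧
    z 0 = x 0 ∧
    (∀ k : Fin m, z k.succ = x (e.bind k)) ∧
    (∀ j : Fin (e.n + 1), (e.alpha j).sat (σ (x j))) ∧
    (∀ j : Fin e.n, ∀ y : ℕ, x j.castSucc < y → y < x j.succ → (e.beta j).sat (σ y))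

/-- Satisfaction of a disjunction of ∃-formulas. -/
def DisjESat {PL : Type} {m : ℕ} (ds : List (ExForm PL m)) (σ : ℕ → Set PL) (L : ℕ∞)
    (z : Fin (m + 1) → ℕ) : Prop :=
  ∃ e ∈ ds, ExForm.ESat e σ L z

/-- Size (number of symbols) of an LTL formula. -/
def LTLF.size {PL : Type} : LTLF PL → ℕ
  | .pos _ => 1
  | .nneg _ => 2
  | .disj φ ψ => φ.size + ψ.size + 1
  | .conj φ ψ => φ.size + ψ.size + 1
  | .next φ => φ.size + 1
  | .wnext φ => φ.size + 1
  | .untl φ ψ => φ.size + ψ.size + 1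
  | .rel φ ψ => φ.size + ψ.size + 1

/-- Size (number of symbols) of a first-order formula. -/
def FOW.size {PL : Type} : FOW PL → ℕ
  | .lt _ _ => 3
  | .eq _ _ => 3
  | .pred _ _ => 2
  | .not φ => φ.size + 1
  | .disj φ ψ => φ.size + ψ.size + 1
  | .conj φ ψ => φ.size + ψ.size + 1
  | .ex _ φ => φ.size + 2
  | .all _ φ => φ.size + 2

/-- Bounded formulas relative to a variable `x`: every quantifier is of the form
`∃y(y ≤ x ∧ …)` or `∀y(y ≤ x → …)`. -/
inductive BoundedBy {PL : Type} (x : ℕ) : FOW PL → Prop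
  | lt (a b : ℕ) : BoundedBy x (.lt a b)
  | eq (a b : ℕ) : BoundedBy x (.eq a b)
  | pred (p : PL) (a : ℕ) : BoundedBy x (.pred p a)
  | not {φ : FOW PL} : BoundedBy x φ → BoundedBy x (.not φ)
  | disj {φ ψ : FOW PL} : BoundedBy x φ → BoundedBy x ψ → BoundedBy x (.disj φ ψ)
  | conj {φ ψ : FOW PL} : BoundedBy x φ → BoundedBy x ψ → BoundedBy x (.conj φ ψ)
  | ex (y : ℕ) {φ : FOW PL} : BoundedBy x φ →
      BoundedBy x (.ex y (.conj (FOW.le y x) φ))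
  | all (y : ℕ) {φ : FOW PL} : BoundedBy x φ →
      BoundedBy x (.all y (FOW.impl (FOW.le y x) φ))

/-- EBFO sentences: `∃x.φ(x)` with `φ(x)` bounded and with exactly one free variable `x`. -/
def IsEBFO {PL : Type} (ψ : FOW PL) : Prop :=
  ∃ (x : ℕ) (φ : FOW PL), ψ = .ex x φ ∧ BoundedBy x φ ∧ φ.free = {x}

/-- The ω-language of a sentence (the valuation is irrelevant). -/
def LinfSent {PL : Type} (ψ : FOW PL) : Set (ℕ → Set PL) :=
  {σ | FOSat σ ⊤ ψ (fun _ => 0)}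

section Extension

variable {PL : Type}

lemma wordOf_append_of_lt {xs : List (Set PL)} {n : ℕ} (hn : n < xs.length)
    (v : List (Set PL)) : wordOf (xs ++ v) n = wordOf xs n := by
  simp [wordOf, List.getD, List.getElem?_append_left hn]

/-- `X` and `U` only ever demand that some position lie below the length, which survives
lengthening the word; `wX` would also be satisfied by hitting the end exactly. -/
theorem CoSafetyLTLnoW.sat_of_extends {φ : LTLF PL} (hφ : CoSafetyLTLnoW φ)
    {σ σ' : ℕ → Set PL} {L L' : ℕ∞} (hL : L ≤ L') (hσ : ∀ n : ℕ, (n : ℕ∞) < L → σ' n = σ n)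
    {i : ℕ} (hi : (i : ℕ∞) < L) (hsat : Sat σ L φ i) : Sat σ' L' φ i := by
  induction hφ generalizing i with
  | pos p | nneg p => simpa [Sat, hσ i hi] using hsat
  | disj _ _ ihφ ihψ => exact hsat.imp (ihφ hi) (ihψ hi)
  | conj _ _ ihφ ihψ => exact hsat.imp (ihφ hi) (ihψ hi)
  | next _ ih =>
    obtain ⟨hnext, hsat⟩ := hsat
    exact ⟨hnext.trans_le hL, ih hnext hsat⟩
  | untl _ _ ihφ ihψ =>
    obtain ⟨j, hij, hj, hsatj, hbefore⟩ := hsat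
    refine ⟨j, hij, hj.trans_le hL, ihψ hj hsatj, fun k hik hkj => ?_⟩
    have hk : (k : ℕ∞) < L := lt_of_le_of_lt (by exact_mod_cast hkj.le) hj
    exact ihφ hk (hbefore k hik hkj)

lemma CoSafetyLTLnoW.finSat_append {φ : LTLF PL} (hφ : CoSafetyLTLnoW φ)
    {xs : List (Set PL)} {i : ℕ} (hi : i < xs.length) (hsat : FinSat xs φ i)
    (v : List (Set PL)) : FinSat (xs ++ v) φ i :=
  hφ.sat_of_extends (by simp) (fun _ hn => wordOf_append_of_lt (by exact_mod_cast hn) v)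
    (by exact_mod_cast hi) hsat

lemma CoSafetyLTLnoW.append_mem_lfinL {φ : LTLF PL} (hφ : CoSafetyLTLnoW φ)
    {xs : List (Set PL)} (hxs : xs ∈ LfinL φ) (v : List (Set PL)) : xs ++ v ∈ LfinL φ :=
  ⟨by simp [hxs.1], hφ.finSat_append (List.length_pos_iff.mpr hxs.1) hxs.2 v⟩

lemma subset_catFin (Lg : Set (List (Set PL))) : Lg ⊆ catFin Lg :=
  fun w hw => ⟨w, hw, [], (List.append_nil w).symm⟩

lemma catFin_eq_self {Lg : Set (List (Set PL))} (h : ∀ u ∈ Lg, ∀ v, u ++ v ∈ Lg) :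
    catFin Lg = Lg :=
  Set.Subset.antisymm (fun _ ⟨u, hu, v, hw⟩ => hw ▸ h u hu v) (subset_catFin Lg)

end Extension

end CoSafetyPaper
open CoSafetyPaper in
theorem cosafetyltl_noW_fin_closed_under_suffix_general
    (PL : Type) (φ : LTLF PL) (h : CoSafetyLTLnoW φ) :
    LfinL φ = catFin (LfinL φ) :=
  (catFin_eq_self fun _ hu v => h.append_mem_lfinL hu v).symm

open CoSafetyPaper in
/-- For every formula φ of coSafetyLTL\{wX}, the finite-word
language of φ is closed under appending arbitrary finite suffixes:
`L_fin(φ) = L_fin(φ)·(2^Σ)^*`. -/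
theorem cosafetyltl_noW_fin_closed_under_suffix
    (PL : Type) [Fintype PL] (φ : LTLF PL) (h : CoSafetyLTLnoW φ) :
    LfinL φ = catFin (LfinL φ) :=
  cosafetyltl_noW_fin_closed_under_suffix_general PL φ h
end

section
/- For every formula φ of coSafetyLTL\{wX} (the fragment of LTL in negation normal form whose only temporal operators are X and U), the infinite-word language of φ equals the concatenation of its finite-word language with all infinite words, i.e., L(φ) = L_fin(φ)·(2^Σ)^ω. -/
namespace CoSafetyPaper

/-! Satisfaction at a position inside a word depends only on the letters of the word. Formulas built
with `X` and `U` only assert the existence of finitely many positions, so they stay true when the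
word is extended (this fails for `wX`, which holds at the last position of every finite word), and
if one holds on an infinite word then it already holds on a long enough prefix. -/

open Filter

variable {PL : Type}

theorem sat_congr_of_eq_below {σ σ' : ℕ → Set PL} {L : ℕ∞}
    (hσ : ∀ n : ℕ, (n : ℕ∞) < L → σ n = σ' n) (φ : LTLF PL) {i : ℕ}
    (hi : (i : ℕ∞) < L) :
    Sat σ L φ i ↔ Sat σ' L φ i := by
  induction φ generalizing i with
  | pos p | nneg p => simp only [Sat, hσ i hi]
  | disj φ ψ ihφ ihψ => exact or_congr (ihφ hi) (ihψ hi)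
  | conj φ ψ ihφ ihψ => exact and_congr (ihφ hi) (ihψ hi)
  | next φ ih => exact and_congr_right ih
  | wnext φ ih =>
    exact or_congr_right' fun hL => ih ((Order.add_one_le_of_lt hi).lt_of_ne hL)
  | untl φ ψ ihφ ihψ =>
    refine exists_congr fun j => and_congr_right fun _ => and_congr_right fun hj =>
      and_congr (ihψ hj) (forall₃_congr fun k _ hkj => ihφ ?_)
    exact lt_trans (by exact_mod_cast hkj) hj
  | rel φ ψ ihφ ihψ =>
    refine or_congr (forall₃_congr fun j _ hj => ihψ hj) (exists_congr fun k =>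
      and_congr_right fun _ => and_congr_right fun hk =>
        and_congr (ihφ hk) (forall₃_congr fun j _ hjk => ihψ ?_))
    exact lt_of_le_of_lt (by exact_mod_cast hjk) hk

theorem CoSafetyLTLnoW.sat_mono_length {φ : LTLF PL} (h : CoSafetyLTLnoW φ)
    {σ : ℕ → Set PL} {L L' : ℕ∞} (hL : L ≤ L') {i : ℕ} (hs : Sat σ L φ i) :
    Sat σ L' φ i := by
  induction h generalizing i with
  | pos p | nneg p => exact hs
  | disj _ _ ihφ ihψ => exact hs.imp ihφ ihψ
  | conj _ _ ihφ ihψ => exact hs.imp ihφ ihψ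
  | next _ ih => exact ⟨hs.1.trans_le hL, ih hs.2⟩
  | untl _ _ ihφ ihψ =>
    obtain ⟨j, hij, hj, hψ, hφ⟩ := hs
    exact ⟨j, hij, hj.trans_le hL, ihψ hψ, fun k hik hkj => ihφ (hφ k hik hkj)⟩

theorem CoSafetyLTLnoW.eventually_sat_of_sat_top {φ : LTLF PL} (h : CoSafetyLTLnoW φ)
    {σ : ℕ → Set PL} {i : ℕ} (hs : Sat σ ⊤ φ i) :
    ∀ᶠ N : ℕ in atTop, Sat σ N φ i := by
  induction h generalizing i with
  | pos p | nneg p => exact Eventually.of_forall fun _ => hs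
  | disj _ _ ihφ ihψ =>
    exact hs.elim (fun hs => (ihφ hs).mono fun _ => Or.inl)
      (fun hs => (ihψ hs).mono fun _ => Or.inr)
  | conj _ _ ihφ ihψ => exact (ihφ hs.1).and (ihψ hs.2)
  | next _ ih =>
    filter_upwards [eventually_gt_atTop (i + 1), ih hs.2] with N hN hsN
    exact ⟨by exact_mod_cast hN, hsN⟩
  | untl _ _ ihφ ihψ =>
    obtain ⟨j, hij, -, hψ, hφ⟩ := hs
    have hφ_all : ∀ᶠ N : ℕ in atTop, ∀ k ∈ Finset.Ico i j, Sat σ N _ k :=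
      (Finset.eventually_all _).2 fun k hk =>
        ihφ (hφ k (Finset.mem_Ico.1 hk).1 (Finset.mem_Ico.1 hk).2)
    filter_upwards [eventually_gt_atTop j, ihψ hψ, hφ_all] with N hN hψN hφN
    exact ⟨j, hij, by exact_mod_cast hN, hψN,
      fun k hik hkj => hφN k (Finset.mem_Ico.2 ⟨hik, hkj⟩)⟩

theorem wordOf_map_range (σ : ℕ → Set PL) {N n : ℕ} (hn : n < N) :
    wordOf ((List.range N).map σ) n = σ n := by
  simp [wordOf, List.getD, hn]

theorem listConc_map_range (σ : ℕ → Set PL) (N : ℕ) :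
    listConc ((List.range N).map σ) (fun n => σ (n + N)) = σ := by
  funext n
  by_cases hn : n < N
  · simp [listConc, hn, wordOf_map_range σ hn]
  · simp [listConc, hn, Nat.sub_add_cancel (Nat.le_of_not_lt hn)]

theorem sat_listConc_iff {u : List (Set PL)} {v : ℕ → Set PL} (φ : LTLF PL) {i : ℕ}
    (hi : i < u.length) :
    Sat (listConc u v) u.length φ i ↔ FinSat u φ i :=
  sat_congr_of_eq_below (fun n hn => if_pos (by exact_mod_cast hn)) φ (by exact_mod_cast hi)

end CoSafetyPaper

open CoSafetyPaper in
theorem cosafetyltl_noW_inf_eq_fin_concat_omega_general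
    (PL : Type) (φ : LTLF PL) (h : CoSafetyLTLnoW φ) :
    LinfL φ = catInf (LfinL φ) := by
  ext σ
  constructor
  · intro hσ
    obtain ⟨N, hsat, hN⟩ :=
      ((h.eventually_sat_of_sat_top hσ).and (Filter.eventually_gt_atTop 0)).exists
    set u := (List.range N).map σ
    have hu : u.length = N := by simp [u]
    refine ⟨u, ⟨List.ne_nil_of_length_pos (hu ▸ hN), ?_⟩, _,
      (listConc_map_range σ N).symm⟩
    rw [← sat_listConc_iff φ (hu ▸ hN), listConc_map_range, hu]
    exact hsat
  · rintro ⟨u, ⟨hne, hu⟩, v, rfl⟩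
    exact h.sat_mono_length le_top ((sat_listConc_iff φ (List.length_pos_iff.2 hne)).2 hu)

open CoSafetyPaper in
/-- For every formula φ of coSafetyLTL\{wX},
`L(φ) = L_fin(φ)·(2^Σ)^ω`. -/
theorem cosafetyltl_noW_inf_eq_fin_concat_omega
    (PL : Type) [Fintype PL] (φ : LTLF PL) (h : CoSafetyLTLnoW φ) :
    LinfL φ = catInf (LfinL φ) :=
  cosafetyltl_noW_inf_eq_fin_concat_omega_general PL φ h
end

section
/- For every formula φ of coSafetyLTL\{wX} there exists a coSafetyFO formula ψ(x) with exactly one free variable such that for every finite word σ ∈ (2^Σ)^+, σ ⊨ φ if and only if σ,0 ⊨ ψ(x); consequently ⟦coSafetyLTL\{wX}⟧_fin ⊆ ⟦coSafetyFO⟧_fin. -/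
namespace CoSafetyPaper

/-
The standard translation, adapted to the guards that coSafetyFO allows. `X φ` at `x` becomes
`∃y (x < y ∧ ∀z (x < z < y → x ≠ x) ∧ φ(y))`: the successor of `x` is the later position with
nothing strictly in between. Since guards are strict, `φ U ψ` splits off the case that `ψ` holds
at once: `ψ(x) ∨ (φ(x) ∧ ∃y (x < y ∧ ψ(y) ∧ ∀z (x < z < y → φ(z))))`.
-/

variable {PL : Type}

def FOW.exAfter (x y : ℕ) (φ : FOW PL) : FOW PL := .ex y (.conj (.lt x y) φ)

def FOW.allBetween (x y z : ℕ) (φ : FOW PL) : FOW PL :=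
  .all y (FOW.impl (.conj (.lt x y) (.lt y z)) φ)

section Semantics

variable {σ : ℕ → Set PL} {L : ℕ∞} {v : ℕ → ℕ} {x y z : ℕ} {φ : FOW PL}

theorem foSat_exAfter (hxy : x ≠ y) :
    FOSat σ L (FOW.exAfter x y φ) v ↔
      ∃ n : ℕ, (n : ℕ∞) < L ∧ v x < n ∧ FOSat σ L φ (Function.update v y n) := by
  simp [FOW.exAfter, FOSat, Function.update_of_ne hxy]

theorem foSat_allBetween (hxy : x ≠ y) (hzy : z ≠ y) :
    FOSat σ L (FOW.allBetween x y z φ) v ↔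
      ∀ n : ℕ, (n : ℕ∞) < L → v x < n → n < v z → FOSat σ L φ (Function.update v y n) := by
  simp only [FOW.allBetween, FOW.impl, FOSat, Function.update_self,
    Function.update_of_ne hxy, Function.update_of_ne hzy, not_and, imp_iff_not_or]
  exact forall_congr' fun n => by tauto

end Semantics

theorem CoSafetyFO.exAfter {φ : FOW PL} (x y : ℕ) (h : CoSafetyFO φ) :
    CoSafetyFO (FOW.exAfter x y φ) :=
  CoSafetyFO.ex x y h

theorem CoSafetyFO.allBetween {φ : FOW PL} (x y z : ℕ) (h : CoSafetyFO φ) :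
    CoSafetyFO (FOW.allBetween x y z φ) :=
  CoSafetyFO.all x y z h

/-- `wX` and `R` lie outside coSafetyLTL\{wX}, so their image is an arbitrary placeholder. -/
def LTLF.toFO : LTLF PL → ℕ → FOW PL
  | .pos p, x => .pred p x
  | .nneg p, x => .not (.pred p x)
  | .disj φ ψ, x => .disj (φ.toFO x) (ψ.toFO x)
  | .conj φ ψ, x => .conj (φ.toFO x) (ψ.toFO x)
  | .next φ, x => .exAfter x (x + 1)
      (.conj (.allBetween x (x + 2) (x + 1) (.not (.eq x x))) (φ.toFO (x + 1)))
  | .untl φ ψ, x => .disj (ψ.toFO x) (.conj (φ.toFO x) (.exAfter x (x + 1)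
      (.conj (ψ.toFO (x + 1)) (.allBetween x (x + 2) (x + 1) (φ.toFO (x + 2))))))
  | .wnext _, x => .eq x x
  | .rel _ _, x => .eq x x

theorem LTLF.free_toFO (φ : LTLF PL) (x : ℕ) : (φ.toFO x).free = {x} := by
  induction φ generalizing x with
  | next φ ih =>
    simp only [toFO, FOW.exAfter, FOW.allBetween, FOW.impl, FOW.free, ih]
    ext a
    simp only [Finset.mem_erase, Finset.mem_union, Finset.mem_insert, Finset.mem_singleton]
    omega
  | untl φ ψ ih₁ ih₂ =>
    simp only [toFO, FOW.exAfter, FOW.allBetween, FOW.impl, FOW.free, ih₁, ih₂]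
    ext a
    simp only [Finset.mem_erase, Finset.mem_union, Finset.mem_insert, Finset.mem_singleton]
    omega
  | _ => simp_all [toFO, FOW.free]

theorem CoSafetyLTLnoW.coSafetyFO_toFO {φ : LTLF PL} (h : CoSafetyLTLnoW φ) (x : ℕ) :
    CoSafetyFO (φ.toFO x) := by
  induction h generalizing x with
  | pos p => exact .pred p x
  | nneg p => exact .npred p x
  | disj _ _ ih₁ ih₂ => exact .disj (ih₁ x) (ih₂ x)
  | conj _ _ ih₁ ih₂ => exact .conj (ih₁ x) (ih₂ x)
  | next _ ih => exact .exAfter _ _ (.conj (.allBetween _ _ _ (.ne x x)) (ih _))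
  | untl _ _ ih₁ ih₂ =>
    exact .disj (ih₂ x) (.conj (ih₁ x) (.exAfter _ _ (.conj (ih₂ _) (.allBetween _ _ _ (ih₁ _)))))

section Correctness

variable {σ : ℕ → Set PL} {L : ℕ∞}

theorem sat_next_iff_exists_succ {φ : LTLF PL} {i : ℕ} :
    Sat σ L (.next φ) i ↔
      ∃ n : ℕ, (n : ℕ∞) < L ∧ i < n ∧ (∀ k : ℕ, (k : ℕ∞) < L → i < k → k < n → False) ∧
        Sat σ L φ n := by
  constructor
  · rintro ⟨hL, hφ⟩
    exact ⟨i + 1, hL, by omega, fun k _ hik hkn => by omega, hφ⟩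
  · rintro ⟨n, hnL, hin, hgap, hφ⟩
    obtain rfl : n = i + 1 := by
      by_contra hne
      exact hgap (i + 1) (lt_of_le_of_lt (by exact_mod_cast (by omega : i + 1 ≤ n)) hnL)
        (by omega) (by omega)
    exact ⟨hnL, hφ⟩

theorem sat_untl_iff_now_or_later {φ ψ : LTLF PL} {i : ℕ} (hi : (i : ℕ∞) < L) :
    Sat σ L (.untl φ ψ) i ↔
      Sat σ L ψ i ∨ Sat σ L φ i ∧ ∃ n : ℕ, (n : ℕ∞) < L ∧ i < n ∧ Sat σ L ψ n ∧
        ∀ k : ℕ, (k : ℕ∞) < L → i < k → k < n → Sat σ L φ k := by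
  constructor
  · rintro ⟨j, hij, hjL, hψ, hφ⟩
    rcases hij.eq_or_lt with rfl | hij
    · exact .inl hψ
    · exact .inr ⟨hφ i le_rfl hij, j, hjL, hij, hψ, fun k _ hik hkj => hφ k hik.le hkj⟩
  · rintro (hψ | ⟨hφi, n, hnL, hin, hψ, hφ⟩)
    · exact ⟨i, le_rfl, hi, hψ, fun k hik hki => by omega⟩
    · refine ⟨n, hin.le, hnL, hψ, fun k hik hkn => ?_⟩
      rcases hik.eq_or_lt with rfl | hik
      · exact hφi
      · exact hφ k (lt_of_le_of_lt (by exact_mod_cast hkn.le) hnL) hik hkn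

theorem CoSafetyLTLnoW.foSat_toFO_iff {φ : LTLF PL} (h : CoSafetyLTLnoW φ) (x : ℕ)
    (v : ℕ → ℕ) (hv : (v x : ℕ∞) < L) :
    FOSat σ L (φ.toFO x) v ↔ Sat σ L φ (v x) := by
  induction h generalizing x v with
  | pos p => rfl
  | nneg p => rfl
  | disj _ _ ih₁ ih₂ => exact or_congr (ih₁ x v hv) (ih₂ x v hv)
  | conj _ _ ih₁ ih₂ => exact and_congr (ih₁ x v hv) (ih₂ x v hv)
  | next _ ih =>
    rw [sat_next_iff_exists_succ]
    simp only [LTLF.toFO, foSat_exAfter (by omega : x ≠ x + 1), FOSat,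
      foSat_allBetween (by omega : x ≠ x + 2) (by omega : x + 1 ≠ x + 2), Function.update_self,
      Function.update_of_ne (by omega : x ≠ x + 1), Function.update_of_ne (by omega : x ≠ x + 2),
      not_true_eq_false]
    refine exists_congr fun n => and_congr_right fun hn => and_congr_right fun _ =>
      and_congr_right fun _ => ?_
    simpa using ih (x + 1) (Function.update v (x + 1) n) (by simpa using hn)
  | untl _ _ ih₁ ih₂ =>
    rw [sat_untl_iff_now_or_later hv]
    simp only [LTLF.toFO, foSat_exAfter (by omega : x ≠ x + 1), FOSat,
      foSat_allBetween (by omega : x ≠ x + 2) (by omega : x + 1 ≠ x + 2), ih₁ x v hv, ih₂ x v hv,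
      Function.update_self, Function.update_of_ne (by omega : x ≠ x + 1)]
    refine or_congr_right (and_congr_right fun _ => exists_congr fun n =>
      and_congr_right fun hn => and_congr_right fun _ => and_congr ?_ ?_)
    · simpa using ih₂ (x + 1) (Function.update v (x + 1) n) (by simpa using hn)
    · refine forall_congr' fun k => forall_congr' fun hk => imp_congr_right fun _ =>
        imp_congr_right fun _ => ?_
      simpa using ih₁ (x + 2) (Function.update (Function.update v (x + 1) n) (x + 2) k)
        (by simpa using hk)

theorem CoSafetyLTLnoW.finSat_iff_foSat_toFO {φ : LTLF PL} (h : CoSafetyLTLnoW φ)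
    {xs : List (Set PL)} (hxs : xs ≠ []) :
    FinSat xs φ 0 ↔ FOSat (wordOf xs) (xs.length : ℕ∞) (φ.toFO 0) (fun _ => 0) :=
  (h.foSat_toFO_iff 0 (fun _ => 0) (by exact_mod_cast List.length_pos_iff.mpr hxs)).symm

theorem CoSafetyLTLnoW.lfinL_eq_lfinFO_toFO {φ : LTLF PL} (h : CoSafetyLTLnoW φ) :
    LfinL φ = LfinFO (φ.toFO 0) :=
  Set.ext fun _ => and_congr_right h.finSat_iff_foSat_toFO

end Correctness

end CoSafetyPaper
open CoSafetyPaper in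
theorem cosafetyltl_noW_to_cosafetyFO_general (PL : Type) :
    (∀ φ : LTLF PL, CoSafetyLTLnoW φ →
      ∃ ψ : FOW PL, CoSafetyFO ψ ∧ HasOneFree ψ ∧
        ∀ xs : List (Set PL), xs ≠ [] →
          (FinSat xs φ 0 ↔ FOSat (wordOf xs) (xs.length : ℕ∞) ψ (fun _ => 0)))
    ∧ CoSafetyLTLnoWFin PL ⊆ CoSafetyFOFin PL := by
  refine ⟨fun φ hφ => ⟨φ.toFO 0, hφ.coSafetyFO_toFO 0, ⟨0, φ.free_toFO 0⟩,
    fun _ => hφ.finSat_iff_foSat_toFO⟩, ?_⟩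
  rintro _ ⟨φ, hφ, rfl⟩
  exact ⟨φ.toFO 0, hφ.coSafetyFO_toFO 0, ⟨0, φ.free_toFO 0⟩, hφ.lfinL_eq_lfinFO_toFO⟩

open CoSafetyPaper in
/-- Every coSafetyLTL\{wX} formula has an equivalent coSafetyFO
formula (with exactly one free variable) over finite words; consequently
`⟦coSafetyLTL\{wX}⟧_fin ⊆ ⟦coSafetyFO⟧_fin`. -/
theorem cosafetyltl_noW_to_cosafetyFO (PL : Type) [Fintype PL] :
    (∀ φ : LTLF PL, CoSafetyLTLnoW φ →
      ∃ ψ : FOW PL, CoSafetyFO ψ ∧ HasOneFree ψ ∧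
        ∀ xs : List (Set PL), xs ≠ [] →
          (FinSat xs φ 0 ↔ FOSat (wordOf xs) (xs.length : ℕ∞) ψ (fun _ => 0)))
    ∧ CoSafetyLTLnoWFin PL ⊆ CoSafetyFOFin PL :=
  cosafetyltl_noW_to_cosafetyFO_general PL
end

section
/- On finite words, coSafetyLTL is strictly more expressive than coSafetyLTL\{wX}: ⟦coSafetyLTL⟧_fin ≠ ⟦coSafetyLTL\{wX}⟧_fin. In particular, if Σ contains a letter a, the finite-word language of the coSafetyLTL formula a ∧ X(a ∧ wX(a ∧ ¬a)) is finite and nonempty, whereas the finite-word language of any coSafetyLTL\{wX} formula is either empty or infinite (since any finite word satisfying such a formula can be extended by any finite suffix while still satisfying it). -/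
namespace CoSafetyPaper

lemma wordOf_append_eq {PL : Type} (xs v : List (Set PL)) {j : ℕ} (hj : j < xs.length) :
    wordOf (xs ++ v) j = wordOf xs j := by
  simp [wordOf, List.getD, List.getElem?_append, hj]

lemma sat_append {PL : Type} (xs v : List (Set PL)) {φ : LTLF PL}
    (h : CoSafetyLTLnoW φ) :
    ∀ i, i < xs.length → Sat (wordOf xs) (xs.length : ℕ∞) φ i →
      Sat (wordOf (xs ++ v)) ((xs ++ v).length : ℕ∞) φ i := by
  induction h with
  | pos p =>
      intro i hi hs
      simpa [Sat, wordOf_append_eq xs v hi] using hs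
  | nneg p =>
      intro i hi hs
      simpa [Sat, wordOf_append_eq xs v hi] using hs
  | disj h1 h2 ih1 ih2 =>
      intro i hi hs
      rcases hs with hs | hs
      · exact Or.inl (ih1 i hi hs)
      · exact Or.inr (ih2 i hi hs)
  | conj h1 h2 ih1 ih2 =>
      intro i hi hs
      exact ⟨ih1 i hi hs.1, ih2 i hi hs.2⟩
  | next h1 ih1 =>
      intro i hi hs
      obtain ⟨hlt, hs⟩ := hs
      have hlt' : i + 1 < xs.length := by exact_mod_cast hlt
      refine ⟨?_, ih1 (i + 1) hlt' hs⟩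
      have : i + 1 < (xs ++ v).length := by
        simp only [List.length_append]; omega
      exact_mod_cast this
  | untl h1 h2 ih1 ih2 =>
      intro i hi hs
      obtain ⟨j, hij, hjL, hsj, hk⟩ := hs
      have hj' : j < xs.length := by exact_mod_cast hjL
      refine ⟨j, hij, ?_, ih2 j hj' hsj, fun k hik hkj => ih1 k (lt_trans hkj hj') (hk k hik hkj)⟩
      have : j < (xs ++ v).length := by
        simp only [List.length_append]; omega
      exact_mod_cast this

lemma lfin_noW_empty_or_infinite {PL : Type} (φ : LTLF PL) (h : CoSafetyLTLnoW φ) :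
    LfinL φ = ∅ ∨ (LfinL φ).Infinite := by
  rcases Set.eq_empty_or_nonempty (LfinL φ) with he | ⟨xs, hxs⟩
  · exact Or.inl he
  · right
    obtain ⟨hne, hsat⟩ := hxs
    have hpos : 0 < xs.length := List.length_pos_iff.mpr hne
    apply Set.infinite_of_injective_forall_mem
      (f := fun n : ℕ => xs ++ List.replicate n (∅ : Set PL))
    · intro m n hmn
      have := congrArg List.length hmn
      simpa using this
    · intro n
      refine ⟨by simp [hne], ?_⟩
      exact sat_append xs (List.replicate n ∅) h 0 hpos hsat

lemma lfin_witness_eq {PL : Type} (a : PL) :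
    LfinL (LTLF.conj (.pos a)
      (.next (.conj (.pos a) (.wnext (.conj (.pos a) (.nneg a)))))) =
    {xs : List (Set PL) | xs.length = 2 ∧ a ∈ wordOf xs 0 ∧ a ∈ wordOf xs 1} := by
  ext xs
  constructor
  · rintro ⟨hne, h0, hlt, h1, hw⟩
    rcases hw with hw | hw
    · have hlen : xs.length = 2 := by exact_mod_cast hw.symm
      exact ⟨hlen, h0, h1⟩
    · exact (hw.2 hw.1).elim
  · rintro ⟨hlen, h0, h1⟩
    have hne : xs ≠ [] := by intro h; simp [h] at hlen
    refine ⟨hne, h0, ?_, h1, Or.inl ?_⟩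
    · rw [hlen]; exact_mod_cast (by norm_num : (1:ℕ) < 2)
    · rw [hlen]

lemma lfin_witness_finite {PL : Type} [Finite PL] (a : PL) :
    (LfinL (LTLF.conj (.pos a)
      (.next (.conj (.pos a) (.wnext (.conj (.pos a) (.nneg a))))))
      : Set (List (Set PL))).Finite := by
  rw [lfin_witness_eq]
  apply Set.Finite.subset (List.finite_length_le (Set PL) 2)
  intro xs hxs
  simp only [Set.mem_setOf_eq] at hxs ⊢
  omega

lemma lfin_witness_nonempty {PL : Type} (a : PL) :
    (LfinL (LTLF.conj (.pos a)
      (.next (.conj (.pos a) (.wnext (.conj (.pos a) (.nneg a))))))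
      : Set (List (Set PL))).Nonempty := by
  rw [lfin_witness_eq]
  exact ⟨[{a}, {a}], by simp [wordOf]⟩

end CoSafetyPaper

open CoSafetyPaper in
/-- On finite words coSafetyLTL is strictly more expressive than
coSafetyLTL\{wX}: the classes differ; the language of `a ∧ X(a ∧ wX(a ∧ ¬a))`
is finite and nonempty, whereas the finite-word language of any
coSafetyLTL\{wX} formula is either empty or infinite. -/
theorem cosafetyltl_fin_ne_cosafetyltl_noW_fin
    (PL : Type) [Fintype PL] (a : PL) :
    CoSafetyLTLFin PL ≠ CoSafetyLTLnoWFin PL ∧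
    (LfinL (LTLF.conj (.pos a)
      (.next (.conj (.pos a) (.wnext (.conj (.pos a) (.nneg a))))))).Finite ∧
    (LfinL (LTLF.conj (.pos a)
      (.next (.conj (.pos a) (.wnext (.conj (.pos a) (.nneg a))))))).Nonempty ∧
    (∀ φ : LTLF PL, CoSafetyLTLnoW φ → LfinL φ = ∅ ∨ (LfinL φ).Infinite) := by
  refine ⟨?_, lfin_witness_finite a, lfin_witness_nonempty a, fun φ h => lfin_noW_empty_or_infinite φ h⟩
  intro heq
  have hmem : LfinL (LTLF.conj (.pos a)
      (.next (.conj (.pos a) (.wnext (.conj (.pos a) (.nneg a)))))) ∈ CoSafetyLTLFin PL :=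
    ⟨_, CoSafetyLTL.conj (.pos a) (.next (.conj (.pos a) (.wnext (.conj (.pos a) (.nneg a))))), rfl⟩
  rw [heq] at hmem
  obtain ⟨ψ, hψ, hLeq⟩ := hmem
  rcases lfin_noW_empty_or_infinite ψ hψ with he | hi
  · exact absurd (hLeq ▸ he) (Set.nonempty_iff_ne_empty.mp (lfin_witness_nonempty a))
  · exact (hLeq ▸ hi) (lfin_witness_finite a)
end

section
/- For every FO formula φ(x) with exactly one free variable there exists a coSafetyFO formula φ'(x) with exactly one free variable such that L_fin(φ'(x)) = L_fin(φ(x))·(2^Σ)^*. -/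
/-! The formula `φ'(x)` says that some nonempty prefix `σ_[0,w]` of the word satisfies `φ`, which
is exactly membership in `L_fin(φ)·(2^Σ)^*`. With `x` at the first position, `φ'` guesses `w` as
`x` itself or as some `y > x`, and evaluates `φ` on `[x, y]` by relativising its quantifiers to
that segment: after pushing negations to the atoms, `∃ z ψ` becomes
`ψ(x) ∨ ∃ z (x < z ∧ z ≤ y ∧ ψ(z))` and `∀ z ψ` becomes `ψ(x) ∧ ∀ z (x < z < y → ψ(z)) ∧ ψ(y)`,
so only the quantifier forms of coSafetyFO occur. -/
namespace CoSafetyPaper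

variable {PL : Type}

open Function

/-- `∃ y ≥ x, ψ(y)` in the form allowed by coSafetyFO, where `φx` is `ψ(x)` and `φy` is `ψ(y)`;
`bex` and `ball` quantify over `y ∈ [x, B]` in the same way. -/
def FOW.exGe (x y : ℕ) (φx φy : FOW PL) : FOW PL :=
  .disj φx (.ex y (.conj (.lt x y) φy))

def FOW.bex (x B y : ℕ) (φx φy : FOW PL) : FOW PL :=
  FOW.exGe x y φx (.conj (FOW.le y B) φy)

def FOW.ball (x B y : ℕ) (φx φy φB : FOW PL) : FOW PL :=
  .conj φx (.conj (.all y (FOW.impl (.conj (.lt x y) (.lt y B)) φy)) φB)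

theorem CoSafetyFO.exGe {x y : ℕ} {φx φy : FOW PL} (hx : CoSafetyFO φx) (hy : CoSafetyFO φy) :
    CoSafetyFO (FOW.exGe x y φx φy) :=
  .disj hx (.ex x y hy)

theorem CoSafetyFO.bex {x B y : ℕ} {φx φy : FOW PL} (hx : CoSafetyFO φx) (hy : CoSafetyFO φy) :
    CoSafetyFO (FOW.bex x B y φx φy) :=
  .exGe hx (.conj (.disj (.lt y B) (.eq y B)) hy)

theorem CoSafetyFO.ball {x B y : ℕ} {φx φy φB : FOW PL} (hx : CoSafetyFO φx)
    (hy : CoSafetyFO φy) (hB : CoSafetyFO φB) : CoSafetyFO (FOW.ball x B y φx φy φB) :=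
  .conj hx (.conj (.all x y B hy) hB)

def polar : Bool → Prop → Prop
  | true, P => P
  | false, P => ¬P

theorem polar_not (b : Bool) (P : Prop) : polar (!b) P ↔ polar b (¬P) := by
  cases b <;> simp [polar]

/-- `φ.relativize x B b ρ c` expresses `φ` (if `b`) or `¬φ` (if `!b`) on the prefix of the word
that ends at the position of `B`, the position of `x` being `0`; `ρ` renames the variables of `φ`,
and the variables from `c` on are fresh. -/
def FOW.relativize (x B : ℕ) : FOW PL → Bool → (ℕ → ℕ) → ℕ → FOW PL
  | .lt a a', true, ρ, _ => .lt (ρ a) (ρ a')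
  | .lt a a', false, ρ, _ => FOW.le (ρ a') (ρ a)
  | .eq a a', true, ρ, _ => .eq (ρ a) (ρ a')
  | .eq a a', false, ρ, _ => .not (.eq (ρ a) (ρ a'))
  | .pred p a, true, ρ, _ => .pred p (ρ a)
  | .pred p a, false, ρ, _ => .not (.pred p (ρ a))
  | .not ψ, b, ρ, c => relativize x B ψ (!b) ρ c
  | .disj ψ χ, true, ρ, c => .disj (relativize x B ψ true ρ c) (relativize x B χ true ρ c)
  | .disj ψ χ, false, ρ, c => .conj (relativize x B ψ false ρ c) (relativize x B χ false ρ c)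
  | .conj ψ χ, true, ρ, c => .conj (relativize x B ψ true ρ c) (relativize x B χ true ρ c)
  | .conj ψ χ, false, ρ, c => .disj (relativize x B ψ false ρ c) (relativize x B χ false ρ c)
  | .ex y ψ, true, ρ, c =>
      FOW.bex x B c (relativize x B ψ true (update ρ y x) c)
        (relativize x B ψ true (update ρ y c) (c + 1))
  | .ex y ψ, false, ρ, c =>
      FOW.ball x B c (relativize x B ψ false (update ρ y x) c)
        (relativize x B ψ false (update ρ y c) (c + 1)) (relativize x B ψ false (update ρ y B) c)
  | .all y ψ, true, ρ, c =>
      FOW.ball x B c (relativize x B ψ true (update ρ y x) c)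
        (relativize x B ψ true (update ρ y c) (c + 1)) (relativize x B ψ true (update ρ y B) c)
  | .all y ψ, false, ρ, c =>
      FOW.bex x B c (relativize x B ψ false (update ρ y x) c)
        (relativize x B ψ false (update ρ y c) (c + 1))

theorem FOW.coSafetyFO_relativize (x B : ℕ) (φ : FOW PL) :
    ∀ b ρ c, CoSafetyFO (φ.relativize x B b ρ c) := by
  induction φ with
  | lt | eq | pred => intro b; cases b <;> intros <;> constructor <;> constructor
  | not ψ ih => exact fun b => ih !b
  | disj ψ χ ih₁ ih₂ | conj ψ χ ih₁ ih₂ =>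
    intro b; cases b <;> intros <;> constructor <;> solve_by_elim
  | ex y ψ ih | all y ψ ih =>
    intro b; cases b <;> intros
    all_goals first | exact .bex (ih ..) (ih ..) | exact .ball (ih ..) (ih ..) (ih ..)

theorem FOW.free_relativize_subset {x B : ℕ} (φ : FOW PL) :
    ∀ {S : Finset ℕ} b ρ c, x ∈ S → B ∈ S → (∀ z, ρ z ∈ S) →
      (φ.relativize x B b ρ c).free ⊆ S := by
  induction φ with
  | lt | eq | pred =>
    intro S b ρ c _ _ hρ; cases b <;>
      simp [relativize, FOW.free, FOW.le, Finset.insert_subset_iff, hρ]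
  | not ψ ih => exact fun b => ih !b
  | disj ψ χ ih₁ ih₂ | conj ψ χ ih₁ ih₂ =>
    intro S b ρ c hx hB hρ
    cases b <;> exact Finset.union_subset (ih₁ _ _ _ hx hB hρ) (ih₂ _ _ _ hx hB hρ)
  | ex y ψ ih | all y ψ ih =>
    intro S b ρ c hx hB hρ
    have hupd : ∀ {T : Finset ℕ} t, t ∈ T → (∀ z, ρ z ∈ T) → ∀ z, update ρ y t z ∈ T :=
      fun t ht hρ z => by rcases eq_or_ne z y with rfl | h <;> simp [*]
    have h₀ := ih b _ c hx hB (hupd x hx hρ)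
    have h₁ := ih b _ c hx hB (hupd B hB hρ)
    have hc := ih b _ (c + 1) (Finset.mem_insert_of_mem hx) (Finset.mem_insert_of_mem hB)
      (hupd c (Finset.mem_insert_self c S) fun z => Finset.mem_insert_of_mem (hρ z))
    cases b <;> simp [relativize, FOW.bex, FOW.exGe, FOW.ball, FOW.le, FOW.impl, FOW.free,
      Finset.union_subset_iff, ← Finset.subset_insert_iff, Finset.insert_subset_iff, *]

section Semantics

variable {σ σ' : ℕ → Set PL} {L : ℕ∞} {x B y : ℕ} {v : ℕ → ℕ}

theorem FOSat_exGe {φx φy : FOW PL} (P : ℕ → Prop) (hL : 0 < L) (hx : v x = 0) (hyx : y ≠ x)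
    (h₀ : FOSat σ L φx v ↔ P 0)
    (hpos : ∀ n : ℕ, 0 < n → (n : ℕ∞) < L → (FOSat σ L φy (update v y n) ↔ P n)) :
    FOSat σ L (FOW.exGe x y φx φy) v ↔ ∃ n : ℕ, (n : ℕ∞) < L ∧ P n := by
  simp only [FOW.exGe, FOSat, update_self, update_of_ne hyx.symm, hx]
  constructor
  · rintro (h | ⟨n, hnL, hn, h⟩)
    · exact ⟨0, hL, h₀.1 h⟩
    · exact ⟨n, hnL, (hpos n hn hnL).1 h⟩
  · rintro ⟨n, hnL, h⟩
    rcases n.eq_zero_or_pos with rfl | hn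
    · exact .inl (h₀.2 h)
    · exact .inr ⟨n, hnL, hn, (hpos n hn hnL).2 h⟩

variable {w : ℕ}

theorem FOSat_bex {φx φy : FOW PL} (P : ℕ → Prop) (hw : (w : ℕ∞) < L) (hx : v x = 0)
    (hB : v B = w) (hyx : y ≠ x) (hyB : y ≠ B) (h₀ : FOSat σ L φx v ↔ P 0)
    (hpos : ∀ n : ℕ, 0 < n → n ≤ w → (FOSat σ L φy (update v y n) ↔ P n)) :
    FOSat σ L (FOW.bex x B y φx φy) v ↔ ∃ n ≤ w, P n := by
  have hle : ∀ n ≤ w, (n : ℕ∞) < L := fun n hn => (Nat.cast_le.2 hn).trans_lt hw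
  rw [FOW.bex, FOSat_exGe (fun n => n ≤ w ∧ P n) (hle 0 w.zero_le) hx hyx (by simpa using h₀)]
  · exact ⟨fun ⟨n, _, h⟩ => ⟨n, h⟩, fun ⟨n, hn, h⟩ => ⟨n, hle n hn, hn, h⟩⟩
  · intro n hn _
    simp only [FOSat, FOW.le, update_self, update_of_ne hyB.symm, hB, ← le_iff_lt_or_eq]
    exact and_congr_right (hpos n hn)

theorem FOSat_ball {φx φy φB : FOW PL} (P : ℕ → Prop) (hw : (w : ℕ∞) < L) (hx : v x = 0)
    (hB : v B = w) (hyx : y ≠ x) (hyB : y ≠ B) (h₀ : FOSat σ L φx v ↔ P 0)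
    (hpos : ∀ n : ℕ, 0 < n → n < w → (FOSat σ L φy (update v y n) ↔ P n))
    (hw' : FOSat σ L φB v ↔ P w) :
    FOSat σ L (FOW.ball x B y φx φy φB) v ↔ ∀ n ≤ w, P n := by
  simp only [FOW.ball, FOW.impl, FOSat, update_self, update_of_ne hyx.symm,
    update_of_ne hyB.symm, hx, hB, h₀, hw', not_and_or, not_lt]
  constructor
  · rintro ⟨h0, hmid, hPw⟩ n hn
    rcases n.eq_zero_or_pos with rfl | hn0
    · exact h0
    rcases hn.lt_or_eq with hnw | rfl
    · exact (hpos n hn0 hnw).1 ((hmid n ((Nat.cast_le.2 hn).trans_lt hw)).resolve_left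
        (by omega))
    · exact hPw
  · intro h
    refine ⟨h 0 w.zero_le, fun n _ => ?_, h w le_rfl⟩
    by_cases hn : 0 < n ∧ n < w
    · exact .inr ((hpos n hn.1 hn.2).2 (h n hn.2.le))
    · omega

theorem FOSat_relativize (hw : (w : ℕ∞) < L) (hσ : ∀ n ≤ w, σ' n = σ n) (φ : FOW PL) :
    ∀ b ρ c v, x < c → B < c → (∀ z, ρ z < c) → v x = 0 → v B = w → (∀ z, v (ρ z) ≤ w) →
      (FOSat σ L (φ.relativize x B b ρ c) v ↔ polar b (FOSat σ' (w + 1 : ℕ) φ (v ∘ ρ))) := by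
  induction φ with
  | lt a a' | eq a a' =>
    intro b ρ c v _ _ _ _ _ _
    cases b <;> simp only [FOW.relativize, FOW.le, FOSat, polar, comp_apply] <;> omega
  | pred p a =>
    intro b ρ c v _ _ _ _ _ hvw
    cases b <;> simp only [FOW.relativize, FOSat, polar, comp_apply, hσ _ (hvw a)]
  | not ψ ih =>
    intro b ρ c v hx hB hρ hv0 hvB hvw
    rw [FOW.relativize, ih (!b) ρ c v hx hB hρ hv0 hvB hvw, polar_not]
    rfl
  | disj ψ χ ih₁ ih₂ | conj ψ χ ih₁ ih₂ =>
    intro b ρ c v hx hB hρ hv0 hvB hvw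
    have h₁ := ih₁ b ρ c v hx hB hρ hv0 hvB hvw
    have h₂ := ih₂ b ρ c v hx hB hρ hv0 hvB hvw
    cases b <;> simp only [polar] at h₁ h₂ <;>
      simp only [FOW.relativize, FOSat, polar, h₁, h₂, not_or, not_and_or]
  | ex y ψ ih | all y ψ ih =>
    intro b ρ c v hx hB hρ hv0 hvB hvw
    have h_at : ∀ t, t < c → v t ≤ w → (FOSat σ L (ψ.relativize x B b (update ρ y t) c) v ↔
        polar b (FOSat σ' (w + 1 : ℕ) ψ (update (v ∘ ρ) y (v t)))) := by
      intro t htc htw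
      rw [← comp_update]
      refine ih b _ c v hx hB (fun z => ?_) hv0 hvB (fun z => ?_) <;>
        rcases eq_or_ne z y with rfl | hz <;> simp [*]
    have h_fresh : ∀ n ≤ w, (FOSat σ L (ψ.relativize x B b (update ρ y c) (c + 1))
        (update v c n) ↔ polar b (FOSat σ' (w + 1 : ℕ) ψ (update (v ∘ ρ) y n))) := by
      intro n hn
      have hρc : ∀ z, ρ z ≠ c := fun z => (hρ z).ne
      have hcomp : update (v ∘ ρ) y n = update v c n ∘ update ρ y c := by
        rw [comp_update, update_self, update_comp_eq_of_forall_ne v n hρc]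
      rw [hcomp]
      refine ih b _ (c + 1) _ (by omega) (by omega) (fun z => ?_) ?_ ?_ (fun z => ?_)
      · rcases eq_or_ne z y with rfl | hz <;> simp [update_of_ne, *]
        exact (hρ z).le
      · rw [update_of_ne hx.ne, hv0]
      · rw [update_of_ne hB.ne, hvB]
      · rcases eq_or_ne z y with rfl | hz <;> simp [update_of_ne, *]
    have h_zero := hv0 ▸ h_at x hx (by omega)
    have h_last := hvB ▸ h_at B hB (by omega)
    cases b <;> simp only [FOW.relativize] <;>
      first
      | rw [FOSat_bex _ hw hv0 hvB hx.ne' hB.ne' h_zero fun n _ hn => h_fresh n hn]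
      | rw [FOSat_ball _ hw hv0 hvB hx.ne' hB.ne' h_zero (fun n _ hn => h_fresh n hn.le) h_last]
    all_goals simp only [polar, FOSat, Nat.cast_lt, Nat.lt_succ_iff, not_exists, not_and, not_forall,
      exists_prop]

end Semantics

theorem mem_catFin_iff_exists_take_mem {Lg : Set (List (Set PL))} (hLg : [] ∉ Lg)
    (xs : List (Set PL)) : xs ∈ catFin Lg ↔ ∃ w < xs.length, xs.take (w + 1) ∈ Lg := by
  constructor
  · rintro ⟨u, hu, v, rfl⟩
    have hu₀ : u.length ≠ 0 := fun h => hLg (List.length_eq_zero_iff.1 h ▸ hu)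
    refine ⟨u.length - 1, by simp; omega, ?_⟩
    rwa [List.take_left' (by omega)]
  · rintro ⟨w, -, h⟩
    exact ⟨_, h, _, (List.take_append_drop _ xs).symm⟩

theorem wordOf_take (xs : List (Set PL)) {k n : ℕ} (h : n < k) :
    wordOf (xs.take k) n = wordOf xs n := by
  simp [wordOf, List.getD, h]

/-- Variable `0` is the free variable, at the first position, and variable `1` marks the last
position of a prefix. -/
def FOW.suffixClosure (φ : FOW PL) : FOW PL :=
  FOW.exGe 0 1 (φ.relativize 0 0 true (fun _ => 0) 2) (φ.relativize 0 1 true (fun _ => 0) 2)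

theorem FOW.coSafetyFO_suffixClosure (φ : FOW PL) : CoSafetyFO φ.suffixClosure :=
  .exGe (φ.coSafetyFO_relativize ..) (φ.coSafetyFO_relativize ..)

theorem FOW.free_suffixClosure (φ : FOW PL) : φ.suffixClosure.free = {0} := by
  have h₀ := φ.free_relativize_subset (S := {0}) (x := 0) (B := 0) true (fun _ => 0) 2
    (by simp) (by simp) (by simp)
  have h₁ := φ.free_relativize_subset (S := {1, 0}) (x := 0) (B := 1) true (fun _ => 0) 2
    (by simp) (by simp) (by simp)
  refine Finset.Subset.antisymm ?_ (by simp [suffixClosure, FOW.exGe, FOW.free])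
  simp only [suffixClosure, FOW.exGe, FOW.free, Finset.union_subset_iff, h₀, true_and,
    ← Finset.subset_insert_iff]
  exact ⟨(Finset.pair_comm 0 1).subset, h₁⟩

theorem FOW.mem_LfinFO_suffixClosure (φ : FOW PL) (xs : List (Set PL)) :
    xs ∈ LfinFO φ.suffixClosure ↔ ∃ w < xs.length, xs.take (w + 1) ∈ LfinFO φ := by
  rcases eq_or_ne xs [] with rfl | hxs
  · simp [LfinFO]
  have hlen : 0 < xs.length := List.length_pos_iff.2 hxs
  have hprefix : ∀ w < xs.length, xs.take (w + 1) ∈ LfinFO φ ↔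
      FOSat (wordOf (xs.take (w + 1))) (w + 1 : ℕ) φ (fun _ => 0) := fun w hw => by
    simp [LfinFO, hxs, Nat.min_eq_left hw]
  have hσ : ∀ w, ∀ n ≤ w, wordOf (xs.take (w + 1)) n = wordOf xs n :=
    fun w n hn => wordOf_take xs (Nat.lt_succ_of_le hn)
  rw [LfinFO, Set.mem_ofPred_eq, and_iff_right hxs, FOW.suffixClosure,
    FOSat_exGe (fun w => FOSat (wordOf (xs.take (w + 1))) (w + 1 : ℕ) φ (fun _ => 0))]
  · simp only [Nat.cast_lt]
    exact exists_congr fun w => and_congr_right fun hw => (hprefix w hw).symm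
  · exact_mod_cast hlen
  · rfl
  · decide
  · exact FOSat_relativize (Nat.cast_lt.2 hlen) (hσ 0) φ true _ 2 _ (by omega) (by omega)
      (fun _ => by omega) rfl rfl (fun _ => le_rfl)
  · intro n hn hnL
    exact FOSat_relativize hnL (hσ n) φ true _ 2 _ (by omega) (by omega) (fun _ => by omega) rfl
      (update_self ..) (fun _ => by simp)

end CoSafetyPaper

open CoSafetyPaper in
theorem fo_to_cosafetyFO_suffix_closure_general
    (PL : Type) (φ : FOW PL) :
    ∃ φ' : FOW PL, CoSafetyFO φ' ∧ HasOneFree φ' ∧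
      LfinFO φ' = catFin (LfinFO φ) := by
  refine ⟨φ.suffixClosure, φ.coSafetyFO_suffixClosure, ⟨0, φ.free_suffixClosure⟩, ?_⟩
  ext xs
  rw [φ.mem_LfinFO_suffixClosure, mem_catFin_iff_exists_take_mem fun h => h.1 rfl]

open CoSafetyPaper in
/-- For every FO formula φ(x) with exactly one free variable
there is a coSafetyFO formula φ'(x) with exactly one free variable such that
`L_fin(φ'(x)) = L_fin(φ(x))·(2^Σ)^*`. -/
theorem fo_to_cosafetyFO_suffix_closure
    (PL : Type) [Fintype PL] (φ : FOW PL) (h : HasOneFree φ) :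
    ∃ φ' : FOW PL, CoSafetyFO φ' ∧ HasOneFree φ' ∧
      LfinFO φ' = catFin (LfinFO φ) :=
  fo_to_cosafetyFO_suffix_closure_general PL φ
end
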